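/- (Corollary 4, robust MD-CRT for real vectors.) Let Ψ₁,…,Ψ_L (L ≥ 2) be distinct nonsingular D×D integer matrices and M a nonsingular D×D real matrix. Let R_Ψ be an lcrm of Ψ₁,…,Ψ_L, let Ψ_{ij} be a gcld of Ψ_i and Ψ_j for i ≠ j, and let l₀ ∈ {1,…,L} satisfy min_{j≠l₀} λ(MΨ_{l₀j}) = max_{1≤i≤L} min_{j≠i} λ(MΨ_{ij}). Let 𝗆 ∈ ℝ^D be written as 𝗆 = MΨ_i n_i + 𝗋_i with n_i ∈ ℤ^D and 𝗋_i ∈ F(MΨ_i) for each i, and suppose ⌊Ψ_{l₀}⁻¹M⁻¹𝗆⌋ ∈ N(Ψ_{l₀}⁻¹R_Ψ). Let erroneous remainders 𝗋̃_i = 𝗋_i + Δ𝗋_i satisfy ‖Δ𝗋_i‖₂ ≤ τ for 1 ≤ i ≤ L, where τ < min_{j≠l₀} λ(MΨ_{l₀j})/4. Then: (a) for each j ≠ l₀, 𝗋_j − 𝗋_{l₀} is the unique minimizer of ‖v − (𝗋̃_j − 𝗋̃_{l₀})‖₂ over v ∈ L(MΨ_{l₀j}); (b) Ψ_{l₀}n_{l₀}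 is the unique vector z ∈ N(R_Ψ) satisfying z ∈ L(Ψ_{l₀}) and z − M⁻¹(𝗋_j − 𝗋_{l₀}) ∈ L(Ψ_j) for all j ≠ l₀, and Ψ_j n_j = Ψ_{l₀}n_{l₀} − M⁻¹(𝗋_j − 𝗋_{l₀}) for all j ≠ l₀; (c) the reconstruction 𝗆̃ = (1/L)∑_{i=1}^L (MΨ_i n_i + 𝗋̃_i) satisfies ‖𝗆̃ − 𝗆‖₂ ≤ τ. -/

import Mathlib

open Matrix

noncomputable section

/-- Real cast of an integer matrix. -/
def rmat {D : ℕ} (A : Matrix (Fin D) (Fin D) ℤ) : Matrix (Fin D) (Fin D) ℝ :=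
  A.map Int.cast

/-- Real cast of an integer vector, viewed in Euclidean space. -/
def rvec {D : ℕ} (v : Fin D → ℤ) : EuclideanSpace ℝ (Fin D) :=
  WithLp.toLp 2 (fun i => (v i : ℝ))

/-- The lattice generated by a real matrix. -/
def latt {D : ℕ} (A : Matrix (Fin D) (Fin D) ℝ) : Set (EuclideanSpace ℝ (Fin D)) :=
  {v | ∃ n : Fin D → ℤ, v = A.mulVec fun i => (n i : ℝ)}

/-- Minimum (Euclidean) distance of the lattice generated by a real matrix. -/
def lamMin {D : ℕ} (A : Matrix (Fin D) (Fin D) ℝ) : ℝ :=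
  sInf {r | ∃ v ∈ latt A, v ≠ 0 ∧ ‖v‖ = r}

/-- The set of integer vectors of the lattice generated by an integer matrix. -/
def lattZ {D : ℕ} (A : Matrix (Fin D) (Fin D) ℤ) : Set (Fin D → ℤ) :=
  {v | ∃ n : Fin D → ℤ, v = A.mulVec n}

/-- N(A): the integer points in the fundamental parallelepiped of a real matrix A. -/
def NN {D : ℕ} (A : Matrix (Fin D) (Fin D) ℝ) : Set (Fin D → ℤ) :=
  {k | ∃ x : Fin D → ℝ, (∀ i, 0 ≤ x i ∧ x i < 1) ∧ (fun i => (k i : ℝ)) = A.mulVec x}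

/-- A is a left divisor of B (i.e. A⁻¹B is an integer matrix). -/
def LeftDvd {D : ℕ} (A B : Matrix (Fin D) (Fin D) ℤ) : Prop :=
  ∃ C : Matrix (Fin D) (Fin D) ℤ, B = A * C

/-- G is a greatest common left divisor of A and B. -/
def IsGcld {D : ℕ} (G A B : Matrix (Fin D) (Fin D) ℤ) : Prop :=
  G.det ≠ 0 ∧ LeftDvd G A ∧ LeftDvd G B ∧
    ∀ C : Matrix (Fin D) (Fin D) ℤ, C.det ≠ 0 → LeftDvd C A → LeftDvd C B → LeftDvd C G

/-- R is a (nonsingular) right multiple of B. -/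
def RightMulOf {D : ℕ} (R B : Matrix (Fin D) (Fin D) ℤ) : Prop :=
  ∃ P : Matrix (Fin D) (Fin D) ℤ, P.det ≠ 0 ∧ R = B * P

/-- R is a least common right multiple of the family M. -/
def IsLcrm {D : ℕ} {ι : Type*} (R : Matrix (Fin D) (Fin D) ℤ)
    (M : ι → Matrix (Fin D) (Fin D) ℤ) : Prop :=
  R.det ≠ 0 ∧ (∀ i, RightMulOf R (M i)) ∧
    ∀ R' : Matrix (Fin D) (Fin D) ℤ, R'.det ≠ 0 → (∀ i, RightMulOf R' (M i)) →
      RightMulOf R' R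

/-- Folding vector ⌊A⁻¹ m⌋ (element-wise floor). -/
def fold {D : ℕ} (A : Matrix (Fin D) (Fin D) ℤ) (m : Fin D → ℤ) : Fin D → ℤ :=
  fun i => ⌊((rmat A)⁻¹.mulVec fun j => (m j : ℝ)) i⌋

/-- A plain vector viewed as a point of Euclidean space. -/
def toEuc {D : ℕ} (v : Fin D → ℝ) : EuclideanSpace ℝ (Fin D) := WithLp.toLp 2 v

/-- The fundamental parallelepiped F(A) of a real matrix A. -/
def FPar {D : ℕ} (A : Matrix (Fin D) (Fin D) ℝ) : Set (EuclideanSpace ℝ (Fin D)) :=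
  {v | ∃ x : Fin D → ℝ, (∀ i, 0 ≤ x i ∧ x i < 1) ∧ v = toEuc (A.mulVec x)}

/-- min_{j≠i} λ(L(M·Ψ_{ij})). -/
def minOverR {D L : ℕ} (M : Matrix (Fin D) (Fin D) ℝ)
    (G : Fin L → Fin L → Matrix (Fin D) (Fin D) ℤ) (i : Fin L) : ℝ :=
  sInf {r | ∃ j, j ≠ i ∧ r = lamMin (M * rmat (G i j))}


/-! ### Auxiliary lemmas -/

lemma rmat_mulVec {D : ℕ} (A : Matrix (Fin D) (Fin D) ℤ) (v : Fin D → ℤ) :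
    (rmat A).mulVec (fun i => (v i : ℝ)) = fun i => ((A.mulVec v) i : ℝ) := by
  funext i
  simp only [rmat, Matrix.mulVec, dotProduct, Matrix.map_apply]
  push_cast
  rfl

lemma rmat_det {D : ℕ} (A : Matrix (Fin D) (Fin D) ℤ) : (rmat A).det = (A.det : ℝ) := by
  have := RingHom.map_det (Int.castRingHom ℝ) A
  simpa [rmat, RingHom.mapMatrix_apply] using this.symm

lemma inv_mulVec_cancel {D : ℕ} (A : Matrix (Fin D) (Fin D) ℝ) (h : A.det ≠ 0)
    (v : Fin D → ℝ) : A⁻¹.mulVec (A.mulVec v) = v := by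
  rw [Matrix.mulVec_mulVec, Matrix.nonsing_inv_mul A (isUnit_iff_ne_zero.mpr h),
    Matrix.one_mulVec]

lemma cz_inj {D : ℕ} {v w : Fin D → ℤ}
    (h : (fun i => ((v i : ℤ) : ℝ)) = fun i => ((w i : ℤ) : ℝ)) : v = w := by
  funext i
  exact_mod_cast congrFun h i

lemma euc_sub_apply {D : ℕ} (a b : EuclideanSpace ℝ (Fin D)) (i : Fin D) :
    (a - b) i = a i - b i := rfl

lemma lamMin_nonneg {D : ℕ} (A : Matrix (Fin D) (Fin D) ℝ) : 0 ≤ lamMin A :=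
  Real.sInf_nonneg (by rintro r ⟨v, _, _, rfl⟩; exact norm_nonneg v)

lemma lamMin_le {D : ℕ} (A : Matrix (Fin D) (Fin D) ℝ) {v : EuclideanSpace ℝ (Fin D)}
    (hv : v ∈ latt A) (h0 : v ≠ 0) : lamMin A ≤ ‖v‖ :=
  csInf_le ⟨0, by rintro r ⟨u, _, _, rfl⟩; exact norm_nonneg u⟩ ⟨v, hv, h0, rfl⟩

lemma minOverR_le {D L : ℕ} (M : Matrix (Fin D) (Fin D) ℝ)
    (G : Fin L → Fin L → Matrix (Fin D) (Fin D) ℤ) {i j : Fin L} (h : j ≠ i) :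
    minOverR M G i ≤ lamMin (M * rmat (G i j)) :=
  csInf_le ⟨0, by rintro r ⟨j', _, rfl⟩; exact lamMin_nonneg _⟩ ⟨j, h, rfl⟩

lemma latt_sub {D : ℕ} {A : Matrix (Fin D) (Fin D) ℝ} {v w : EuclideanSpace ℝ (Fin D)}
    (hv : v ∈ latt A) (hw : w ∈ latt A) : v - w ∈ latt A := by
  obtain ⟨a, ha⟩ := hv
  obtain ⟨b, hb⟩ := hw
  refine ⟨a - b, ?_⟩
  funext i
  rw [euc_sub_apply, ha, hb]
  simp only [Matrix.mulVec, dotProduct, Pi.sub_apply]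
  push_cast
  rw [← Finset.sum_sub_distrib]
  congr 1
  funext j
  ring

lemma mem_lattZ_of_lcrm {D L : ℕ}
    (Ψ : Fin L → Matrix (Fin D) (Fin D) ℤ) (hΨ : ∀ i, (Ψ i).det ≠ 0)
    (RΨ : Matrix (Fin D) (Fin D) ℤ) (hR : IsLcrm RΨ Ψ)
    (w : Fin D → ℤ) (hw : ∀ i, w ∈ lattZ (Ψ i)) : w ∈ lattZ RΨ := by
  by_cases hw0 : w = 0
  · exact ⟨0, by simp [hw0]⟩
  obtain ⟨k, hk⟩ : ∃ k, w k ≠ 0 := by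
    by_contra h; push_neg at h; exact hw0 (funext h)
  set d : ℤ := ∏ i, (Ψ i).det with hd
  have hd0 : d ≠ 0 := Finset.prod_ne_zero_iff.mpr fun i _ => hΨ i
  set S : Matrix (Fin D) (Fin D) ℤ := d • (1 : Matrix (Fin D) (Fin D) ℤ) with hS
  set R' : Matrix (Fin D) (Fin D) ℤ := S.updateCol k w with hR'
  have hcr : d * (S.cramer w k) = d ^ D * w k := by
    have h2 := congrFun (Matrix.mulVec_cramer S w) k
    have hl : (S.mulVec (S.cramer w)) k = d * (S.cramer w k) := by
      rw [hS, Matrix.smul_mulVec, Pi.smul_apply, smul_eq_mul, Matrix.one_mulVec]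
    have hr : (S.det • w) k = d ^ D * w k := by
      rw [hS, Matrix.det_smul, Matrix.det_one, mul_one, Fintype.card_fin, Pi.smul_apply,
        smul_eq_mul]
    rw [hl, hr] at h2
    exact h2
  have hdetR' : R'.det ≠ 0 := by
    have hcd : R'.det = S.cramer w k := (Matrix.cramer_apply _ _ _).symm
    rw [hcd]
    intro h
    rw [h, mul_zero] at hcr
    rcases mul_eq_zero.mp hcr.symm with h' | h'
    · exact pow_ne_zero _ hd0 h'
    · exact hk h'
  have hcol : ∀ i j, ∃ p : Fin D → ℤ, (fun a => R' a j) = (Ψ i).mulVec p := by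
    intro i j
    by_cases hj : j = k
    · subst hj
      obtain ⟨p, hp⟩ := hw i
      exact ⟨p, by funext a; simp [hR', Matrix.updateCol_apply, ← hp]⟩
    · obtain ⟨c, hc⟩ : (Ψ i).det ∣ d := Finset.dvd_prod_of_mem _ (Finset.mem_univ i)
      refine ⟨c • (Ψ i).adjugate.mulVec (fun a => if a = j then 1 else 0), ?_⟩
      have key : (Ψ i).mulVec (c • (Ψ i).adjugate.mulVec (fun a => if a = j then 1 else 0))
          = (c * (Ψ i).det) • (fun a => if a = j then (1:ℤ) else 0) := by
        rw [Matrix.mulVec_smul, Matrix.mulVec_mulVec, Matrix.mul_adjugate,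
          Matrix.smul_mulVec, Matrix.one_mulVec, smul_smul, mul_comm]
      rw [key]
      funext a
      simp only [hR', Matrix.updateCol_apply, hj, if_neg hj, hS, Matrix.smul_apply,
        Matrix.one_apply, Pi.smul_apply, smul_eq_mul]
      rw [hc, mul_comm ((Ψ i).det) c]
      by_cases ha : a = j <;> simp [ha]
  have hRM : ∀ i, RightMulOf R' (Ψ i) := by
    intro i
    choose p hp using hcol i
    have hfac : R' = Ψ i * Matrix.of (fun a j => p j a) := by
      ext a j
      have := congrFun (hp j) a
      simpa [Matrix.mul_apply, Matrix.mulVec, dotProduct] using this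
    refine ⟨Matrix.of (fun a j => p j a), ?_, hfac⟩
    intro h0
    apply hdetR'
    rw [hfac, Matrix.det_mul, h0, mul_zero]
  obtain ⟨Q, _, hQ⟩ := hR.2.2 R' hdetR' hRM
  refine ⟨Q.mulVec (fun a => if a = k then 1 else 0), ?_⟩
  have hwcol : w = R'.mulVec (fun a => if a = k then 1 else 0) := by
    funext a
    simp [Matrix.mulVec, dotProduct, hR', Matrix.updateCol_apply, mul_ite,
      Finset.sum_ite_eq']
  rw [hwcol, hQ, ← Matrix.mulVec_mulVec]

/-- Corollary 4, robust MD-CRT for real vectors. -/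
theorem robust_mdcrt_real {D L : ℕ} (hD : 0 < D) (hL : 2 ≤ L)
    (Ψ : Fin L → Matrix (Fin D) (Fin D) ℤ)
    (hΨdet : ∀ i, (Ψ i).det ≠ 0)
    (hdistinct : ∀ i j, i ≠ j → Ψ i ≠ Ψ j)
    (M : Matrix (Fin D) (Fin D) ℝ) (hM : M.det ≠ 0)
    (RΨ : Matrix (Fin D) (Fin D) ℤ) (hRΨ : IsLcrm RΨ Ψ)
    (G : Fin L → Fin L → Matrix (Fin D) (Fin D) ℤ)
    (hG : ∀ i j, i ≠ j → IsGcld (G i j) (Ψ i) (Ψ j))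
    (l₀ : Fin L)
    (hl₀ : minOverR M G l₀ = sSup {r | ∃ i, r = minOverR M G i})
    (msf : EuclideanSpace ℝ (Fin D))
    (n : Fin L → Fin D → ℤ) (rsf : Fin L → EuclideanSpace ℝ (Fin D))
    (hdecomp : ∀ i, msf =
      toEuc ((M * rmat (Ψ i)).mulVec fun j => (n i j : ℝ)) + rsf i)
    (hrem : ∀ i, rsf i ∈ FPar (M * rmat (Ψ i)))
    (hrange : (fun i => ⌊((rmat (Ψ l₀))⁻¹.mulVec (M⁻¹.mulVec msf)) i⌋)
      ∈ NN ((rmat (Ψ l₀))⁻¹ * rmat RΨ))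
    (Δr rt : Fin L → EuclideanSpace ℝ (Fin D))
    (hrt : ∀ i, rt i = rsf i + Δr i)
    (τ : ℝ) (hτ : ∀ i, ‖Δr i‖ ≤ τ)
    (hbound : τ < minOverR M G l₀ / 4) :
    -- (a) 𝗋_j − 𝗋_{l₀} is the unique minimizer of ‖v − (𝗋̃_j − 𝗋̃_{l₀})‖₂ over L(MΨ_{l₀j})
    (∀ j, j ≠ l₀ → rsf j - rsf l₀ ∈ latt (M * rmat (G l₀ j)) ∧
      ∀ v ∈ latt (M * rmat (G l₀ j)), v ≠ rsf j - rsf l₀ →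
        ‖(rsf j - rsf l₀) - (rt j - rt l₀)‖ < ‖v - (rt j - rt l₀)‖) ∧
    -- (b) Ψ_{l₀}n_{l₀} is the unique z ∈ N(R_Ψ) with z ∈ L(Ψ_{l₀}) and
    --     z − M⁻¹(𝗋_j − 𝗋_{l₀}) ∈ L(Ψ_j); and Ψ_j n_j = Ψ_{l₀}n_{l₀} − M⁻¹(𝗋_j − 𝗋_{l₀})
    ((Ψ l₀).mulVec (n l₀) ∈ NN (rmat RΨ) ∧ (Ψ l₀).mulVec (n l₀) ∈ lattZ (Ψ l₀) ∧
      (∀ j, j ≠ l₀ →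
        rvec ((Ψ l₀).mulVec (n l₀)) - toEuc (M⁻¹.mulVec (rsf j - rsf l₀))
          ∈ latt (rmat (Ψ j))) ∧
      (∀ z : Fin D → ℤ, z ∈ NN (rmat RΨ) → z ∈ lattZ (Ψ l₀) →
        (∀ j, j ≠ l₀ →
          rvec z - toEuc (M⁻¹.mulVec (rsf j - rsf l₀)) ∈ latt (rmat (Ψ j))) →
        z = (Ψ l₀).mulVec (n l₀)) ∧
      (∀ j, j ≠ l₀ → rvec ((Ψ j).mulVec (n j)) =
        rvec ((Ψ l₀).mulVec (n l₀)) - toEuc (M⁻¹.mulVec (rsf j - rsf l₀)))) ∧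
    -- (c) the reconstruction 𝗆̃ = (1/L) ∑ᵢ (MΨᵢnᵢ + 𝗋̃ᵢ) satisfies ‖𝗆̃ − 𝗆‖₂ ≤ τ
    ‖(L : ℝ)⁻¹ • (∑ i, (toEuc ((M * rmat (Ψ i)).mulVec fun j => (n i j : ℝ)) + rt i))
        - msf‖ ≤ τ := by
  have hLpos : 0 < L := lt_of_lt_of_le (by norm_num) hL
  have hτ0 : 0 ≤ τ := le_trans (norm_nonneg _) (hτ ⟨0, hLpos⟩)
  have h4τ : 4 * τ < minOverR M G l₀ := by linarith
  have hΨr : ∀ i, (rmat (Ψ i)).det ≠ 0 := fun i => by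
    rw [rmat_det]; exact_mod_cast hΨdet i
  -- the integer difference vectors
  set u : Fin L → Fin D → ℤ :=
    fun j => (Ψ l₀).mulVec (n l₀) - (Ψ j).mulVec (n j) with hu
  have hd' : ∀ i, rsf i =
      msf - toEuc ((M * rmat (Ψ i)).mulVec fun j => (n i j : ℝ)) := by
    intro i; rw [hdecomp i]; abel
  -- main identity for remainder differences
  have hsub : ∀ j, rsf j - rsf l₀ = toEuc (M.mulVec (fun i => ((u j) i : ℝ))) := by
    intro j
    rw [hd' j, hd' l₀]
    have hfun : (M * rmat (Ψ l₀)).mulVec (fun i => (n l₀ i : ℝ))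
        - (M * rmat (Ψ j)).mulVec (fun i => (n j i : ℝ))
        = M.mulVec (fun i => ((u j) i : ℝ)) := by
      rw [← Matrix.mulVec_mulVec, ← Matrix.mulVec_mulVec, rmat_mulVec, rmat_mulVec,
        ← Matrix.mulVec_sub]
      have harg : ((fun i => (((Ψ l₀).mulVec (n l₀)) i : ℝ))
          - fun i => (((Ψ j).mulVec (n j)) i : ℝ)) = fun i => ((u j) i : ℝ) := by
        funext i
        simp only [hu, Pi.sub_apply]
        push_cast
        ring
      rw [harg]
    ext i
    rw [euc_sub_apply, euc_sub_apply, euc_sub_apply]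
    have := congrFun hfun i
    rw [Pi.sub_apply] at this
    simp only [toEuc] at *
    linarith [this]
  have hMinv : ∀ j, M⁻¹.mulVec (rsf j - rsf l₀) = fun i => ((u j) i : ℝ) := by
    intro j
    rw [← WithLp.ofLp_sub, hsub j]
    exact inv_mulVec_cancel M hM _
  -- Part (a)
  have parta : ∀ j, j ≠ l₀ → rsf j - rsf l₀ ∈ latt (M * rmat (G l₀ j)) ∧
      ∀ v ∈ latt (M * rmat (G l₀ j)), v ≠ rsf j - rsf l₀ →
        ‖(rsf j - rsf l₀) - (rt j - rt l₀)‖ < ‖v - (rt j - rt l₀)‖ := by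
    intro j hj
    have hGj := hG l₀ j (Ne.symm hj)
    obtain ⟨C₀, hC₀⟩ := hGj.2.1
    obtain ⟨C₁, hC₁⟩ := hGj.2.2.1
    have hmem : rsf j - rsf l₀ ∈ latt (M * rmat (G l₀ j)) := by
      refine ⟨C₀.mulVec (n l₀) - C₁.mulVec (n j), ?_⟩
      rw [hsub j]
      have huj : u j = (G l₀ j).mulVec (C₀.mulVec (n l₀) - C₁.mulVec (n j)) := by
        rw [hu, Matrix.mulVec_sub, Matrix.mulVec_mulVec, Matrix.mulVec_mulVec,
          ← hC₀, ← hC₁]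
      rw [huj, ← rmat_mulVec, Matrix.mulVec_mulVec]
      rfl
    refine ⟨hmem, ?_⟩
    intro v hv hvne
    have hwlat : v - (rsf j - rsf l₀) ∈ latt (M * rmat (G l₀ j)) := latt_sub hv hmem
    have hwne : v - (rsf j - rsf l₀) ≠ 0 := sub_ne_zero.mpr hvne
    have hlam : minOverR M G l₀ ≤ ‖v - (rsf j - rsf l₀)‖ :=
      le_trans (minOverR_le M G hj) (lamMin_le _ hwlat hwne)
    have hΔnorm : ‖Δr j - Δr l₀‖ ≤ 2 * τ := by
      calc ‖Δr j - Δr l₀‖ ≤ ‖Δr j‖ + ‖Δr l₀‖ := norm_sub_le _ _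
      _ ≤ 2 * τ := by linarith [hτ j, hτ l₀]
    have hrtdiff : rt j - rt l₀ = (rsf j - rsf l₀) + (Δr j - Δr l₀) := by
      rw [hrt j, hrt l₀]; abel
    have hLHS : ‖(rsf j - rsf l₀) - (rt j - rt l₀)‖ ≤ 2 * τ := by
      rw [hrtdiff]
      have : (rsf j - rsf l₀) - ((rsf j - rsf l₀) + (Δr j - Δr l₀))
          = -(Δr j - Δr l₀) := by abel
      rw [this, norm_neg]
      exact hΔnorm
    have hRHS : ‖v - (rsf j - rsf l₀)‖ - ‖Δr j - Δr l₀‖ ≤ ‖v - (rt j - rt l₀)‖ := by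
      have : v - (rt j - rt l₀) = (v - (rsf j - rsf l₀)) - (Δr j - Δr l₀) := by
        rw [hrtdiff]; abel
      rw [this]
      exact norm_sub_norm_le _ _
    linarith
  refine ⟨parta, ?_, ?_⟩
  · -- Part (b)
    obtain ⟨x, hx, hxe⟩ := hrem l₀
    have hfold : (fun i => ⌊((rmat (Ψ l₀))⁻¹.mulVec (M⁻¹.mulVec msf)) i⌋) = n l₀ := by
      have hmsf : (M⁻¹.mulVec msf : Fin D → ℝ)
          = (rmat (Ψ l₀)).mulVec ((fun i => (n l₀ i : ℝ)) + x) := by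
        have h1 : (msf : Fin D → ℝ)
            = (M * rmat (Ψ l₀)).mulVec ((fun i => (n l₀ i : ℝ)) + x) := by
          rw [Matrix.mulVec_add, hdecomp l₀, hxe]
          rfl
        rw [h1, ← Matrix.mulVec_mulVec]
        exact inv_mulVec_cancel M hM _
      rw [hmsf, inv_mulVec_cancel _ (hΨr l₀)]
      funext i
      rw [Pi.add_apply]
      rw [Int.floor_intCast_add]
      have : ⌊x i⌋ = 0 := Int.floor_eq_zero_iff.mpr ⟨(hx i).1, (hx i).2⟩
      rw [this, add_zero]
    rw [hfold] at hrange
    obtain ⟨y, hy, hye⟩ := hrange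
    have hb1 : (Ψ l₀).mulVec (n l₀) ∈ NN (rmat RΨ) := by
      refine ⟨y, hy, ?_⟩
      have h2 : (rmat (Ψ l₀)).mulVec (fun i => ((n l₀ i : ℤ) : ℝ))
          = (rmat (Ψ l₀) * ((rmat (Ψ l₀))⁻¹ * rmat RΨ)).mulVec y := by
        rw [← Matrix.mulVec_mulVec]
        exact congrArg _ hye
      rw [← Matrix.mul_assoc,
        Matrix.mul_nonsing_inv _ (isUnit_iff_ne_zero.mpr (hΨr l₀)), Matrix.one_mul] at h2
      rw [← h2, rmat_mulVec]
    have hb2 : (Ψ l₀).mulVec (n l₀) ∈ lattZ (Ψ l₀) := ⟨n l₀, rfl⟩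
    have hb3 : ∀ j, j ≠ l₀ →
        rvec ((Ψ l₀).mulVec (n l₀)) - toEuc (M⁻¹.mulVec (rsf j - rsf l₀))
          ∈ latt (rmat (Ψ j)) := by
      intro j hj
      refine ⟨n j, ?_⟩
      rw [hMinv j, rmat_mulVec]
      funext i
      rw [euc_sub_apply]
      show ((Ψ l₀).mulVec (n l₀) i : ℝ) - ((u j) i : ℝ) = ((Ψ j).mulVec (n j) i : ℝ)
      simp only [hu, Pi.sub_apply]
      push_cast
      ring
    have hb5 : ∀ j, j ≠ l₀ → rvec ((Ψ j).mulVec (n j)) =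
        rvec ((Ψ l₀).mulVec (n l₀)) - toEuc (M⁻¹.mulVec (rsf j - rsf l₀)) := by
      intro j hj
      rw [hMinv j]
      ext i
      rw [euc_sub_apply]
      show ((Ψ j).mulVec (n j) i : ℝ) = ((Ψ l₀).mulVec (n l₀) i : ℝ) - ((u j) i : ℝ)
      simp only [hu, Pi.sub_apply]
      push_cast
      ring
    refine ⟨hb1, hb2, hb3, ?_, hb5⟩
    -- uniqueness
    intro z hzNN hzlatt hzall
    set w : Fin D → ℤ := z - (Ψ l₀).mulVec (n l₀) with hwdef
    have hwall : ∀ i, w ∈ lattZ (Ψ i) := by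
      intro i
      by_cases hi : i = l₀
      · obtain ⟨k, hk⟩ := hzlatt
        refine ⟨k - n l₀, ?_⟩
        rw [hi, hwdef, hk, Matrix.mulVec_sub]
      · obtain ⟨m, hm⟩ := hzall i hi
        rw [hMinv i, rmat_mulVec] at hm
        have hzu : z - u i = (Ψ i).mulVec m := by
          apply cz_inj
          funext a
          have h2 := congrFun hm a
          rw [euc_sub_apply] at h2
          simp only [rvec, toEuc] at h2
          show (((z - u i) a : ℤ) : ℝ) = ((((Ψ i).mulVec m) a : ℤ) : ℝ)
          rw [Pi.sub_apply]
          push_cast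
          exact_mod_cast h2
        refine ⟨m - n i, ?_⟩
        rw [Matrix.mulVec_sub, ← hzu, hwdef, hu]
        funext a
        simp only [Pi.sub_apply]
        ring
    have hwR : w ∈ lattZ RΨ := mem_lattZ_of_lcrm Ψ hΨdet RΨ hRΨ w hwall
    obtain ⟨p, hp⟩ := hwR
    obtain ⟨x₁, hx₁, he₁⟩ := hzNN
    obtain ⟨x₂, hx₂, he₂⟩ := hb1
    have hRdet : (rmat RΨ).det ≠ 0 := by
      rw [rmat_det]; exact_mod_cast hRΨ.1
    have hcast1 : (fun i => ((w i : ℤ) : ℝ)) = (rmat RΨ).mulVec (fun i => (p i : ℝ)) := by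
      rw [rmat_mulVec, hp]
    have hcast2 : (fun i => ((w i : ℤ) : ℝ)) = (rmat RΨ).mulVec (x₁ - x₂) := by
      rw [Matrix.mulVec_sub, ← he₁, ← he₂]
      funext i
      simp only [hwdef, Pi.sub_apply]
      push_cast
      ring
    have hxx : x₁ - x₂ = fun i => (p i : ℝ) := by
      have h9 := congrArg ((rmat RΨ)⁻¹.mulVec) (hcast2.symm.trans hcast1)
      rwa [inv_mulVec_cancel _ hRdet, inv_mulVec_cancel _ hRdet] at h9
    have hp0 : p = 0 := by
      funext i
      have h1 := congrFun hxx i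
      rw [Pi.sub_apply] at h1
      have habs : |(p i : ℝ)| < 1 := by
        rw [abs_lt]
        constructor <;> [linarith [(hx₁ i).1, (hx₂ i).2, h1]; linarith [(hx₁ i).2, (hx₂ i).1, h1]]
      have : |p i| < 1 := by exact_mod_cast habs
      simp only [Pi.zero_apply]
      exact Int.abs_lt_one_iff.mp this
    have hw0 : w = 0 := by rw [hp, hp0, Matrix.mulVec_zero]
    have := sub_eq_zero.mp hw0
    exact this
  · -- Part (c)
    have he : ∀ i, toEuc ((M * rmat (Ψ i)).mulVec fun j => (n i j : ℝ)) + rt i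
        = msf + Δr i := by
      intro i
      rw [hrt i, hdecomp i]
      abel
    have hsum : (∑ i, (toEuc ((M * rmat (Ψ i)).mulVec fun j => (n i j : ℝ)) + rt i))
        = L • msf + ∑ i, Δr i := by
      rw [Finset.sum_congr rfl (fun i _ => he i), Finset.sum_add_distrib,
        Finset.sum_const, Finset.card_univ, Fintype.card_fin]
    have hconv : (L : ℝ)⁻¹ •
        (∑ i, (toEuc ((M * rmat (Ψ i)).mulVec fun j => (n i j : ℝ)) + rt i)) - msf
        = (L : ℝ)⁻¹ • ∑ i, Δr i := by
      rw [hsum, smul_add]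
      have hLm : (L : ℝ)⁻¹ • (L • msf : EuclideanSpace ℝ (Fin D)) = msf := by
        rw [← Nat.cast_smul_eq_nsmul ℝ L msf, smul_smul,
          inv_mul_cancel₀ (by exact_mod_cast hLpos.ne' : (L : ℝ) ≠ 0), one_smul]
      rw [hLm]
      abel
    rw [hconv]
    have hnorm : ‖∑ i, Δr i‖ ≤ L * τ := by
      calc ‖∑ i, Δr i‖ ≤ ∑ i, ‖Δr i‖ := norm_sum_le _ _
      _ ≤ ∑ _i : Fin L, τ := Finset.sum_le_sum (fun i _ => hτ i)
      _ = L * τ := by rw [Finset.sum_const, Finset.card_univ, Fintype.card_fin,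
        nsmul_eq_mul]
    calc ‖(L : ℝ)⁻¹ • ∑ i, Δr i‖ = (L : ℝ)⁻¹ * ‖∑ i, Δr i‖ := by
          rw [norm_smul, norm_inv, Real.norm_natCast]
      _ ≤ (L : ℝ)⁻¹ * (L * τ) := by
          apply mul_le_mul_of_nonneg_left hnorm
          positivity
      _ = τ := by
          rw [← mul_assoc, inv_mul_cancel₀ (by exact_mod_cast hLpos.ne' : (L : ℝ) ≠ 0),
            one_mul]
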